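/- arXiv:1903.00517 — 2 statements merged into one kernel-verified Lean document; each statement's English description precedes it below -/
import Mathlib

section
/- Let k : ℤ → [0,∞) be symmetric, summable, k(0)=0, and suppose k(j) ≥ c for all j in the support of k, for some c > 0. Then for all admissible u, Γ₂(u)(0) ≥ (2c − |k|₁)·Γ(u)(0) + (1/2)·(ℒu(0))², i.e. CD(2c−|k|₁, 2) holds. -/
open scoped ENNReal

/-- Non-local operator at 0: `ℒu(0) = ∑_{j∈ℤ} k(j) (u(j)-u(0))`. -/
noncomputable def Lop (k u : ℤ → ℝ) : ℝ := ∑' j : ℤ, k j * (u j - u 0)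

/-- Carré du champ at 0. -/
noncomputable def Gamma (k u : ℤ → ℝ) : ℝ := (1/2) * ∑' j : ℤ, k j * (u j - u 0)^2

/-- Iterated carré du champ at 0 (real-valued). -/
noncomputable def Gamma2 (k u : ℤ → ℝ) : ℝ :=
  (1/4) * ∑' p : ℤ × ℤ, k p.1 * k p.2 * (u (p.1 + p.2) - u p.1 - u p.2 + u 0)^2

/-- Iterated carré du champ at 0, valued in `ℝ≥0∞`. -/
noncomputable def Gamma2e (k u : ℤ → ℝ) : ℝ≥0∞ :=
  (1/4) * ∑' p : ℤ × ℤ, ENNReal.ofReal (k p.1 * k p.2 * (u (p.1 + p.2) - u p.1 - u p.2 + u 0)^2)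

/-!
Write `f j = u j - u 0`. Pairing the square of the second difference with `(f i - f j)²`, the
identity `(a + b)² + (a - b)² = 2 (a² + b²)` on the antidiagonal `(j, -j)` shows that
`∑_{i,j} k i k j ((u (i+j) - u i - u j + u 0)² + (f i - f j)²)`
is at least `2 ∑_j k j² (f j² + f (-j)²)`,
and `k j² ≥ c k j` bounds this below by `8 c Γ(u)`. On the other hand the sum of the second
terms expands to `4 |k|₁ Γ(u) - 2 (ℒu)²`.
-/

theorem hasSum_mul_of_summable_norm {R ι ι' : Type*} [NormedRing R] [CompleteSpace R]
    {f : ι → R} {g : ι' → R} (hf : Summable fun x => ‖f x‖)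
    (hg : Summable fun x => ‖g x‖) :
    HasSum (fun p : ι × ι' => f p.1 * g p.2) ((∑' x, f x) * ∑' y, g y) :=
  hf.of_norm.hasSum.mul hg.of_norm.hasSum (summable_mul_of_summable_norm hf hg)

theorem hasSum_mul_mul_sub_sq {α : Type*} {k f : α → ℝ} (hk : ∀ i, 0 ≤ k i)
    (hk_sum : Summable k) (hf_abs : Summable fun i => k i * |f i|)
    (hf_sq : Summable fun i => k i * f i ^ 2) :
    HasSum (fun p : α × α => k p.1 * k p.2 * (f p.1 - f p.2) ^ 2)
      (2 * (∑' i, k i) * (∑' i, k i * f i ^ 2) - 2 * (∑' i, k i * f i) ^ 2) := by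
  have norm_k : Summable fun i => ‖k i‖ :=
    hk_sum.congr fun i => by rw [Real.norm_of_nonneg (hk i)]
  have norm_kf : Summable fun i => ‖k i * f i‖ :=
    hf_abs.congr fun i => by rw [norm_mul, Real.norm_of_nonneg (hk i), Real.norm_eq_abs]
  have norm_kf_sq : Summable fun i => ‖k i * f i ^ 2‖ :=
    hf_sq.congr fun i => by rw [Real.norm_of_nonneg (mul_nonneg (hk i) (sq_nonneg _))]
  have h11 := hasSum_mul_of_summable_norm norm_kf_sq norm_k
  have h22 := hasSum_mul_of_summable_norm norm_k norm_kf_sq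
  have h12 := hasSum_mul_of_summable_norm norm_kf norm_kf
  rw [show 2 * (∑' i, k i) * (∑' i, k i * f i ^ 2) - 2 * (∑' i, k i * f i) ^ 2
      = (∑' i, k i * f i ^ 2) * (∑' i, k i) + (∑' i, k i) * (∑' i, k i * f i ^ 2)
        - 2 * ((∑' i, k i * f i) * ∑' i, k i * f i) by ring]
  exact ((h11.add h22).sub (h12.mul_left 2)).congr_fun fun p => by ring

theorem tsum_add_comp_neg {α : Type*} [AddGroup α] {g : α → ℝ} (hg : Summable g) :
    ∑' j, (g j + g (-j)) = 2 * ∑' j, g j := by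
  have hg_neg : Summable fun j => g (-j) := hg.comp_injective neg_injective
  rw [hg.tsum_add hg_neg, show ∑' j, g (-j) = ∑' j, g j from (Equiv.neg α).tsum_eq g]
  ring

theorem two_mul_tsum_le_tsum_of_le_antidiagonal {α : Type*} [AddGroup α] {F : α × α → ℝ}
    {g : α → ℝ} {a : ℝ} (hF : Summable F) (hF_nonneg : ∀ p, 0 ≤ F p) (hg : Summable g)
    (hle : ∀ j, a * (g j + g (-j)) ≤ F (j, -j)) :
    2 * a * ∑' j, g j ≤ ∑' p, F p := by
  have hanti : Function.Injective fun j : α => (j, -j) := fun _ _ h => congrArg Prod.fst h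
  calc 2 * a * ∑' j, g j
      = ∑' j, a * (g j + g (-j)) := by rw [tsum_mul_left, tsum_add_comp_neg hg]; ring
    _ ≤ ∑' j, F (j, -j) :=
        ((hg.add (hg.comp_injective neg_injective)).mul_left a).tsum_le_tsum hle
          (hF.comp_injective hanti)
    _ ≤ ∑' p, F p := tsum_comp_le_tsum_of_inj hF hF_nonneg hanti

section Lattice

variable {k : ℤ → ℝ} {c : ℝ}

theorem mul_le_sq_of_le_of_ne_zero (hpos : ∀ j, 0 ≤ k j) (hlow : ∀ j, k j ≠ 0 → c ≤ k j)
    (j : ℤ) : c * k j ≤ k j ^ 2 := by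
  rcases eq_or_ne (k j) 0 with hj | hj
  · simp [hj]
  · rw [sq]
    exact mul_le_mul_of_nonneg_right (hlow j hj) (hpos j)

theorem two_mul_add_le_sq_add_sq_antidiagonal (hpos : ∀ j, 0 ≤ k j)
    (hsym : ∀ j, k (-j) = k j) (hlow : ∀ j, k j ≠ 0 → c ≤ k j)
    (u : ℤ → ℝ) (j : ℤ) :
    2 * c * (k j * (u j - u 0) ^ 2 + k (-j) * (u (-j) - u 0) ^ 2) ≤
      k j * k (-j) * (u (j + -j) - u j - u (-j) + u 0) ^ 2
        + k j * k (-j) * ((u j - u 0) - (u (-j) - u 0)) ^ 2 := by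
  rw [hsym, add_neg_cancel]
  calc 2 * c * (k j * (u j - u 0) ^ 2 + k j * (u (-j) - u 0) ^ 2)
      = 2 * (c * k j) * ((u j - u 0) ^ 2 + (u (-j) - u 0) ^ 2) := by ring
    _ ≤ 2 * k j ^ 2 * ((u j - u 0) ^ 2 + (u (-j) - u 0) ^ 2) := by
      gcongr
      exact mul_le_sq_of_le_of_ne_zero hpos hlow j
    _ = _ := by ring

end Lattice

theorem stmt12_general (k : ℤ → ℝ) (hpos : ∀ j, 0 ≤ k j) (hsym : ∀ j, k (-j) = k j)
    (hsum : Summable k) (c : ℝ)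
    (hlow : ∀ j : ℤ, k j ≠ 0 → c ≤ k j) (u : ℤ → ℝ)
    (h1 : Summable (fun p : ℤ × ℤ =>
      k p.1 * k p.2 * (u (p.1 + p.2) - u p.1 - u p.2 + u 0) ^ 2))
    (h3 : Summable (fun j : ℤ => k j * (u j - u 0) ^ 2))
    (h4 : Summable (fun j : ℤ => k j * |u j - u 0|)) :
    (2 * c - (∑' j : ℤ, k j)) * Gamma k u + (1/2) * (Lop k u) ^ 2 ≤ Gamma2 k u := by
  have hsq := hasSum_mul_mul_sub_sq (f := fun j => u j - u 0) hpos hsum h4 h3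
  have hdiag := two_mul_tsum_le_tsum_of_le_antidiagonal (h1.add hsq.summable)
    (fun p => by have := hpos p.1; have := hpos p.2; positivity) h3
    (two_mul_add_le_sq_add_sq_antidiagonal hpos hsym hlow u)
  rw [h1.tsum_add hsq.summable, hsq.tsum_eq] at hdiag
  rw [Gamma, Gamma2, Lop]
  linear_combination hdiag / 4

theorem stmt12 (k : ℤ → ℝ) (hpos : ∀ j, 0 ≤ k j) (hsym : ∀ j, k (-j) = k j)
    (h0 : k 0 = 0) (hsum : Summable k) (c : ℝ) (hc : 0 < c)
    (hlow : ∀ j : ℤ, k j ≠ 0 → c ≤ k j) (u : ℤ → ℝ)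
    (h1 : Summable (fun p : ℤ × ℤ =>
      k p.1 * k p.2 * (u (p.1 + p.2) - u p.1 - u p.2 + u 0) ^ 2))
    (h3 : Summable (fun j : ℤ => k j * (u j - u 0) ^ 2))
    (h4 : Summable (fun j : ℤ => k j * |u j - u 0|)) :
    (2 * c - (∑' j : ℤ, k j)) * Gamma k u + (1/2) * (Lop k u) ^ 2 ≤ Gamma2 k u :=
  stmt12_general k hpos hsym hsum c hlow u h1 h3 h4
end

section
/- Let k : ℤ → [0,∞) be symmetric, summable, k(0)=0, with k non-increasing on ℕ, k(1) > 0, and finite second moment M₂ := ∑_{j∈ℕ} k(j)·j² < ∞. Then there exists a finite d > 0 of the form d = C₀·|k|₁·M₂/k(1)² (with C₀ an absolute constant) such that for all admissible u, Γ₂(u)(0) ≥ (1/d)·(ℒu(0))², i.e. ℒ satisfies CD(0,d) at 0. -/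
open scoped ENNReal

open Finset Real

/-!
Symmetrizing `u` does not increase `Γ₂(u)(0)` (convexity), so one may assume `u` even with
`u 0 = 0`, and then `ℒu(0) = 2 ∑_{n ≥ 1} k(n) u(n)`. Cauchy–Schwarz against the second moment
gives `(ℒu(0))² ≤ 4 M₂ ∑_{n ≥ 1} k(n) u(n)² / n²`, and a discrete Hardy inequality, which needs
`k` non-increasing, bounds this weighted sum by `∑_{n ≥ 1} k(n) (u(n+1) - u(n) - u(1))²` plus
`u(1)² ∑ k`. Both are controlled by `Γ₂(u)(0)`: its terms at `(n, 1)` are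
`k(n) k(1) (u(n+1) - u(n) - u(1))²`, and its term at `(1, -1)` is `4 k(1)² u(1)²`.
-/

lemma sum_range_inv_sqrt_succ_le (n : ℕ) : ∑ i ∈ range n, (√(i + 1))⁻¹ ≤ 2 * √n := by
  induction n with
  | zero => simp
  | succ n ih =>
    rw [sum_range_succ]
    have ha := sqrt_nonneg n
    have hb : 0 < √(n + 1) := by positivity
    have hab : √(n + 1) ^ 2 = √n ^ 2 + 1 := by
      rw [sq_sqrt (by positivity), sq_sqrt (by positivity)]
    have : (√(n + 1))⁻¹ ≤ 2 * (√(n + 1) - √n) := by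
      rw [inv_le_iff_one_le_mul₀' hb]
      nlinarith [sq_nonneg (√(n + 1) - √n)]
    push_cast
    linarith

lemma sum_Ico_sqrt_div_sq_le (i N : ℕ) :
    ∑ m ∈ Ico (i + 1) N, √m / (m + 1) ^ 2 ≤ 2 * (√(i + 1))⁻¹ := by
  have hterm : ∀ m ∈ Ico (i + 1) N,
      √m / (m + 1) ^ 2 ≤ -2 * (√(↑(m + 1)))⁻¹ - -2 * (√m)⁻¹ := by
    intro m hm
    have hm1 : (1 : ℝ) ≤ m := by exact_mod_cast (by grind : 1 ≤ m)
    have ha : 0 < √m := sqrt_pos.2 (by linarith)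
    have hb : 0 < √(m + 1) := by positivity
    have hab : √(m + 1) ^ 2 = √m ^ 2 + 1 := by
      rw [sq_sqrt (by positivity), sq_sqrt (by positivity)]
    have hle : √m ≤ √(m + 1) := sqrt_le_sqrt (by linarith)
    have hden : ((m : ℝ) + 1) ^ 2 = √(m + 1) ^ 4 := by
      rw [show (4 : ℕ) = 2 * 2 from rfl, pow_mul, sq_sqrt (by positivity)]
    push_cast
    rw [hden, div_le_iff₀ (by positivity)]
    field_simp
    nlinarith [mul_pos ha hb, mul_pos (mul_pos ha hb) hb, sq_nonneg (√(m + 1) - √m)]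
  rcases le_or_gt N (i + 1) with hN | hN
  · rw [Ico_eq_empty_of_le hN, sum_empty]; positivity
  calc ∑ m ∈ Ico (i + 1) N, √m / (m + 1) ^ 2
      ≤ ∑ m ∈ Ico (i + 1) N, (-2 * (√(↑(m + 1)))⁻¹ - -2 * (√m)⁻¹) := sum_le_sum hterm
    _ = 2 * (√(i + 1))⁻¹ - 2 * (√N)⁻¹ := by
      rw [sum_Ico_sub (fun m : ℕ => -2 * (√m)⁻¹) hN.le]; push_cast; ring
    _ ≤ 2 * (√(i + 1))⁻¹ := by have := sqrt_nonneg N; simp only [sub_le_self_iff]; positivity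

lemma sq_sub_le_two_mul_sqrt_mul_sum (x : ℕ → ℝ) (m : ℕ) :
    (x m - x 0) ^ 2 ≤ 2 * √m * ∑ i ∈ range m, √(i + 1) * (x (i + 1) - x i) ^ 2 := by
  rw [← sum_range_sub]
  calc (∑ i ∈ range m, (x (i + 1) - x i)) ^ 2
      ≤ (∑ i ∈ range m, (√(i + 1))⁻¹) * ∑ i ∈ range m, √(i + 1) * (x (i + 1) - x i) ^ 2 := by
        refine sum_sq_le_sum_mul_sum_of_sq_le_mul _ (fun i _ => by positivity)
          (fun i _ => by positivity) (fun i _ => ?_)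
        rw [← mul_assoc, inv_mul_cancel₀ (by positivity), one_mul]
    _ ≤ 2 * √m * ∑ i ∈ range m, √(i + 1) * (x (i + 1) - x i) ^ 2 :=
        mul_le_mul_of_nonneg_right (sum_range_inv_sqrt_succ_le m)
          (sum_nonneg fun i _ => by positivity)

/-- Discrete Hardy inequality: Cauchy–Schwarz with weights `√(i + 1)` on the telescoping sum
`x m - x 0`, then swap the order of summation and use `∑_{m > i} √m / (m + 1)² ≤ 2 / √(i + 1)`. -/
theorem sum_range_mul_sq_sub_div_sq_le {a : ℕ → ℝ} (ha : ∀ n, 0 ≤ a n) (hanti : Antitone a)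
    (x : ℕ → ℝ) (N : ℕ) :
    ∑ m ∈ range N, a m * (x m - x 0) ^ 2 / (m + 1) ^ 2
      ≤ 4 * ∑ i ∈ range N, a i * (x (i + 1) - x i) ^ 2 := by
  set d : ℕ → ℝ := fun i => √(i + 1) * (x (i + 1) - x i) ^ 2
  have hd : ∀ i, 0 ≤ d i := fun i => by positivity
  calc ∑ m ∈ range N, a m * (x m - x 0) ^ 2 / (m + 1) ^ 2
      ≤ ∑ m ∈ range N, 2 * (a m * (√m / (m + 1) ^ 2) * ∑ i ∈ range m, d i) := by
        refine sum_le_sum fun m _ => ?_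
        calc a m * (x m - x 0) ^ 2 / (m + 1) ^ 2
            ≤ a m * (2 * √m * ∑ i ∈ range m, d i) / (m + 1) ^ 2 := by
              gcongr
              · exact ha m
              · exact sq_sub_le_two_mul_sqrt_mul_sum x m
          _ = 2 * (a m * (√m / (m + 1) ^ 2) * ∑ i ∈ range m, d i) := by ring
    _ = 2 * ∑ i ∈ range N, ∑ m ∈ Ico (i + 1) N, a m * (√m / (m + 1) ^ 2) * d i := by
        rw [← mul_sum]
        congr 1
        simp only [mul_sum, range_eq_Ico]
        exact (sum_Ico_Ico_comm' 0 N _).symm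
    _ ≤ 2 * ∑ i ∈ range N, a i * d i * ∑ m ∈ Ico (i + 1) N, √m / (m + 1) ^ 2 := by
        gcongr with i hi
        rw [mul_sum]
        refine sum_le_sum fun m hm => ?_
        have hai : a m ≤ a i := hanti (by grind)
        have hc : 0 ≤ √m / (m + 1) ^ 2 := by positivity
        nlinarith [mul_nonneg (sub_nonneg.2 hai) (mul_nonneg hc (hd i))]
    _ ≤ 2 * ∑ i ∈ range N, a i * d i * (2 * (√(i + 1))⁻¹) := by
        gcongr with i hi
        · exact mul_nonneg (ha i) (hd i)
        · exact sum_Ico_sqrt_div_sq_le i N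
    _ = 4 * ∑ i ∈ range N, a i * (x (i + 1) - x i) ^ 2 := by
        rw [mul_sum, mul_sum]
        refine sum_congr rfl fun i _ => ?_
        have : √((i : ℝ) + 1) ≠ 0 := by positivity
        simp only [d]
        field_simp
        ring

theorem sq_sum_range_mul_le {a : ℕ → ℝ} (ha : ∀ n, 0 ≤ a n) (hanti : Antitone a)
    (x : ℕ → ℝ) (N : ℕ) :
    (∑ n ∈ range N, a n * x n) ^ 2
      ≤ (∑ n ∈ range N, a n * (n + 1) ^ 2)
        * (16 * ∑ n ∈ range N, a n * (x (n + 1) - x n - x 0) ^ 2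
          + 18 * x 0 ^ 2 * ∑ n ∈ range N, a n) := by
  have hCS : (∑ n ∈ range N, a n * x n) ^ 2
      ≤ (∑ n ∈ range N, a n * (n + 1) ^ 2) * ∑ n ∈ range N, a n * x n ^ 2 / (n + 1) ^ 2 := by
    refine sum_sq_le_sum_mul_sum_of_sq_le_mul _ (fun n _ => by have := ha n; positivity)
      (fun n _ => by have := ha n; positivity) (fun n _ => le_of_eq ?_)
    field_simp
  have hweighted : ∑ n ∈ range N, a n * x n ^ 2 / (n + 1) ^ 2
      ≤ 2 * ∑ n ∈ range N, a n * (x n - x 0) ^ 2 / (n + 1) ^ 2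
        + 2 * x 0 ^ 2 * ∑ n ∈ range N, a n := by
    rw [mul_sum, mul_sum, ← sum_add_distrib]
    refine sum_le_sum fun n _ => ?_
    have h1 : (1 : ℝ) ≤ (n + 1) ^ 2 := one_le_pow₀ (by linarith [n.cast_nonneg (α := ℝ)])
    have hx : x n ^ 2 ≤ 2 * (x n - x 0) ^ 2 + 2 * x 0 ^ 2 := by
      nlinarith [sq_nonneg (x n - 2 * x 0)]
    have := ha n
    calc a n * x n ^ 2 / (n + 1) ^ 2
        ≤ a n * (2 * (x n - x 0) ^ 2 + 2 * x 0 ^ 2) / (n + 1) ^ 2 := by gcongr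
      _ = 2 * (a n * (x n - x 0) ^ 2 / (n + 1) ^ 2) + 2 * x 0 ^ 2 * (a n / (n + 1) ^ 2) := by
        ring
      _ ≤ 2 * (a n * (x n - x 0) ^ 2 / (n + 1) ^ 2) + 2 * x 0 ^ 2 * a n := by
        gcongr
        exact div_le_self (ha n) h1
  have hsteps : ∑ n ∈ range N, a n * (x (n + 1) - x n) ^ 2
      ≤ 2 * ∑ n ∈ range N, a n * (x (n + 1) - x n - x 0) ^ 2
        + 2 * x 0 ^ 2 * ∑ n ∈ range N, a n := by
    rw [mul_sum, mul_sum, ← sum_add_distrib]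
    refine sum_le_sum fun n _ => ?_
    nlinarith [mul_nonneg (ha n) (sq_nonneg (x (n + 1) - x n - 2 * x 0))]
  have hhardy := sum_range_mul_sq_sub_div_sq_le ha hanti x N
  have hM : 0 ≤ ∑ n ∈ range N, a n * (n + 1) ^ 2 := sum_nonneg fun n _ => by
    have := ha n; positivity
  refine hCS.trans (mul_le_mul_of_nonneg_left ?_ hM)
  linarith

noncomputable def symmetrize (u : ℤ → ℝ) (j : ℤ) : ℝ := (u j + u (-j)) / 2 - u 0

lemma symmetrize_zero (u : ℤ → ℝ) : symmetrize u 0 = 0 := by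
  simp [symmetrize]

lemma symmetrize_neg (u : ℤ → ℝ) (j : ℤ) : symmetrize u (-j) = symmetrize u j := by
  simp only [symmetrize, neg_neg]; ring

lemma Gamma2e_symmetrize_le {k : ℤ → ℝ} (hk0 : ∀ j, 0 ≤ k j) (hksym : ∀ j, k (-j) = k j)
    (u : ℤ → ℝ) : Gamma2e k (symmetrize u) ≤ Gamma2e k u := by
  set f : ℤ × ℤ → ℝ≥0∞ := fun p =>
    ENNReal.ofReal (k p.1 * k p.2 * (u (p.1 + p.2) - u p.1 - u p.2 + u 0) ^ 2)
  set g : ℤ × ℤ → ℝ≥0∞ := fun p => ENNReal.ofReal (k p.1 * k p.2 *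
    (symmetrize u (p.1 + p.2) - symmetrize u p.1 - symmetrize u p.2 + symmetrize u 0) ^ 2)
  -- the second difference of `symmetrize u` at `p` is the mean of those of `u` at `p` and `-p`
  have hpoint : ∀ p, 2 * g p ≤ f p + f (-p) := by
    rintro ⟨i, j⟩
    have hkk : 0 ≤ k i * k j := mul_nonneg (hk0 i) (hk0 j)
    simp only [f, g, Prod.fst_neg, Prod.snd_neg, hksym]
    rw [← ENNReal.ofReal_ofNat 2, ← ENNReal.ofReal_mul zero_le_two,
      ← ENNReal.ofReal_add (by positivity) (by positivity)]
    refine ENNReal.ofReal_le_ofReal ?_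
    simp only [symmetrize, neg_add, neg_zero]
    nlinarith [mul_nonneg hkk (sq_nonneg (u (i + j) - u i - u j - (u (-i + -j) - u (-i) - u (-j))))]
  have hsum : 2 * ∑' p, g p ≤ 2 * ∑' p, f p := calc
    2 * ∑' p, g p = ∑' p, 2 * g p := ENNReal.tsum_mul_left.symm
    _ ≤ ∑' p, (f p + f (-p)) := ENNReal.tsum_le_tsum hpoint
    _ = 2 * ∑' p, f p := by
      rw [ENNReal.tsum_add, two_mul]
      congr 1
      exact (Equiv.neg (ℤ × ℤ)).tsum_eq f
  unfold Gamma2e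
  gcongr (1 / 4) * ?_
  exact (ENNReal.mul_le_mul_iff_right two_ne_zero ENNReal.ofNat_ne_top).1 hsum

lemma summable_mul_sub_of_summable_mul_abs {k u : ℤ → ℝ} (hk0 : ∀ j, 0 ≤ k j)
    (hu : Summable fun j => k j * |u j - u 0|) : Summable fun j => k j * (u j - u 0) :=
  hu.of_norm_bounded fun j => by rw [Real.norm_eq_abs, abs_mul, abs_of_nonneg (hk0 j)]

lemma hasSum_Lop {k u : ℤ → ℝ} (hksym : ∀ j, k (-j) = k j)
    (hu : Summable fun j => k j * (u j - u 0)) :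
    HasSum (fun n : ℕ => 2 * (k (n + 1) * symmetrize u (n + 1))) (Lop k u) := by
  have hpos : Summable fun n : ℕ => k (n + 1) * (u (n + 1) - u 0) :=
    hu.comp_injective fun m n h => by simpa using h
  have hneg : Summable fun n : ℕ => k (-(n + 1)) * (u (-(n + 1)) - u 0) :=
    hu.comp_injective (i := fun n : ℕ => -((n : ℤ) + 1)) fun m n h => by simpa using h
  rw [Lop, tsum_of_add_one_of_neg_add_one (f := fun j => k j * (u j - u 0)) hpos hneg,
    sub_self, mul_zero, add_zero]
  convert hpos.hasSum.add hneg.hasSum using 1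
  funext n
  simp only [symmetrize, hksym]
  ring

lemma summable_of_Gamma2e_ne_top {k : ℤ → ℝ} (hk0 : ∀ j, 0 ≤ k j) {u : ℤ → ℝ}
    (h : Gamma2e k u ≠ ⊤) :
    Summable fun p : ℤ × ℤ => k p.1 * k p.2 * (u (p.1 + p.2) - u p.1 - u p.2 + u 0) ^ 2 := by
  have hfin : ∑' p : ℤ × ℤ, ENNReal.ofReal
      (k p.1 * k p.2 * (u (p.1 + p.2) - u p.1 - u p.2 + u 0) ^ 2) ≠ ⊤ := by
    intro htop
    simp [Gamma2e, htop] at h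
  exact (ENNReal.summable_toReal hfin).congr fun p =>
    ENNReal.toReal_ofReal (mul_nonneg (mul_nonneg (hk0 _) (hk0 _)) (sq_nonneg _))

lemma Gamma2e_eq_ofReal_Gamma2 {k : ℤ → ℝ} (hk0 : ∀ j, 0 ≤ k j) {u : ℤ → ℝ}
    (h : Gamma2e k u ≠ ⊤) : Gamma2e k u = ENNReal.ofReal (Gamma2 k u) := by
  rw [Gamma2e, Gamma2, ENNReal.ofReal_mul (by norm_num),
    ENNReal.ofReal_tsum_of_nonneg (fun p => mul_nonneg (mul_nonneg (hk0 _) (hk0 _)) (sq_nonneg _))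
      (summable_of_Gamma2e_ne_top hk0 h),
    ENNReal.ofReal_div_of_pos (by norm_num)]
  simp

lemma sq_mul_sq_le_Gamma2 {k u : ℤ → ℝ} (hk0 : ∀ j, 0 ≤ k j) (hksym : ∀ j, k (-j) = k j)
    (hF : Summable fun p : ℤ × ℤ => k p.1 * k p.2 * (u (p.1 + p.2) - u p.1 - u p.2 + u 0) ^ 2) :
    k 1 ^ 2 * (u 1 + u (-1) - 2 * u 0) ^ 2 ≤ 4 * Gamma2 k u := by
  have := hF.le_tsum (1, -1) fun p _ => mul_nonneg (mul_nonneg (hk0 _) (hk0 _)) (sq_nonneg _)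
  rw [Gamma2]
  simp only [hksym, Int.reduceNeg, add_neg_cancel] at this
  linarith

lemma mul_sum_range_le_Gamma2 {k u : ℤ → ℝ} (hk0 : ∀ j, 0 ≤ k j)
    (hF : Summable fun p : ℤ × ℤ => k p.1 * k p.2 * (u (p.1 + p.2) - u p.1 - u p.2 + u 0) ^ 2)
    (N : ℕ) :
    k 1 * ∑ n ∈ range N, k (n + 1) * (u (n + 1 + 1) - u (n + 1) - u 1 + u 0) ^ 2
      ≤ 4 * Gamma2 k u := by
  let e : ℕ ↪ ℤ × ℤ := ⟨fun n => ((n : ℤ) + 1, 1), fun m n h => by simpa using h⟩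
  calc k 1 * ∑ n ∈ range N, k (n + 1) * (u (n + 1 + 1) - u (n + 1) - u 1 + u 0) ^ 2
      = ∑ p ∈ (range N).map e, k p.1 * k p.2 * (u (p.1 + p.2) - u p.1 - u p.2 + u 0) ^ 2 := by
        rw [sum_map, mul_sum]
        refine sum_congr rfl fun n _ => ?_
        change _ = k ((n : ℤ) + 1) * k 1 * (u ((n : ℤ) + 1 + 1) - u ((n : ℤ) + 1) - u 1 + u 0) ^ 2
        ring
    _ ≤ ∑' p : ℤ × ℤ, k p.1 * k p.2 * (u (p.1 + p.2) - u p.1 - u p.2 + u 0) ^ 2 :=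
        hF.sum_le_tsum _ fun p _ => mul_nonneg (mul_nonneg (hk0 _) (hk0 _)) (sq_nonneg _)
    _ = 4 * Gamma2 k u := by rw [Gamma2]; ring

lemma two_mul_tsum_succ_le_tsum {k : ℤ → ℝ} (hk0 : ∀ j, 0 ≤ k j) (hksym : ∀ j, k (-j) = k j)
    (hksum : Summable k) : 2 * ∑' n : ℕ, k (n + 1) ≤ ∑' j, k j := by
  have hpos : Summable fun n : ℕ => k (n + 1) := hksum.comp_injective fun m n h => by simpa using h
  have hneg : Summable fun n : ℕ => k (-(n + 1)) :=
    hksum.comp_injective (i := fun n : ℕ => -((n : ℤ) + 1)) fun m n h => by simpa using h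
  rw [tsum_of_add_one_of_neg_add_one hpos hneg]
  simp only [hksym]
  linarith [hk0 0]

lemma sum_range_succ_mul_sq_le {k : ℤ → ℝ} (hk0 : ∀ j, 0 ≤ k j)
    (hM : Summable fun j : ℕ => k j * (j : ℝ) ^ 2) (N : ℕ) :
    ∑ n ∈ range N, k (n + 1) * ((n : ℝ) + 1) ^ 2 ≤ ∑' j : ℕ, k j * (j : ℝ) ^ 2 := by
  calc ∑ n ∈ range N, k (n + 1) * ((n : ℝ) + 1) ^ 2
      = ∑ j ∈ range (N + 1), k j * (j : ℝ) ^ 2 := by simp [sum_range_succ']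
    _ ≤ ∑' j : ℕ, k j * (j : ℝ) ^ 2 := hM.sum_le_tsum _ fun j _ => by have := hk0 j; positivity

lemma Gamma2_nonneg {k : ℤ → ℝ} (hk0 : ∀ j, 0 ≤ k j) (u : ℤ → ℝ) : 0 ≤ Gamma2 k u :=
  mul_nonneg (by norm_num)
    (tsum_nonneg fun p => mul_nonneg (mul_nonneg (hk0 _) (hk0 _)) (sq_nonneg _))

theorem sq_sum_range_le_Gamma2 {k : ℤ → ℝ} (hk0 : ∀ j, 0 ≤ k j) (hksym : ∀ j, k (-j) = k j)
    (hksum : Summable k) (hmono : ∀ m n : ℤ, 1 ≤ m → m ≤ n → k n ≤ k m)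
    (hM : Summable fun j : ℕ => k j * (j : ℝ) ^ 2) {v : ℤ → ℝ} (hv0 : v 0 = 0) (hv1 : v (-1) = v 1)
    (hF : Summable fun p : ℤ × ℤ => k p.1 * k p.2 * (v (p.1 + p.2) - v p.1 - v p.2 + v 0) ^ 2)
    (N : ℕ) :
    k 1 ^ 2 * (∑ n ∈ range N, k (n + 1) * v (n + 1)) ^ 2
      ≤ 41 * (∑' j, k j) * (∑' j : ℕ, k j * (j : ℝ) ^ 2) * Gamma2 k v := by
  set K := ∑' j, k j
  set Γ := Gamma2 k v
  set a : ℕ → ℝ := fun n => k (n + 1)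
  set x : ℕ → ℝ := fun n => v (n + 1)
  set D := ∑ n ∈ range N, a n * (x (n + 1) - x n - x 0) ^ 2
  set KN := ∑ n ∈ range N, a n
  set MN := ∑ n ∈ range N, a n * ((n : ℝ) + 1) ^ 2
  have ha : ∀ n, 0 ≤ a n := fun n => hk0 _
  have hanti : Antitone a := fun m n h => hmono _ _ (by omega) (by omega)
  have hΓ : 0 ≤ Γ := Gamma2_nonneg hk0 v
  have hK : ∀ N, 2 * ∑ n ∈ range N, a n ≤ K := fun N => by
    have hsum : Summable a := hksum.comp_injective fun m n h => by simpa using h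
    linarith [hsum.sum_le_tsum (range N) fun n _ => ha n, two_mul_tsum_succ_le_tsum hk0 hksym hksum]
  have hk1 : 2 * k 1 ≤ K := by simpa [a] using hK 1
  have hx0 : k 1 ^ 2 * x 0 ^ 2 ≤ Γ := by
    have := sq_mul_sq_le_Gamma2 hk0 hksym hF
    rw [hv0, hv1] at this
    simp only [x, Nat.cast_zero, zero_add]
    linarith
  have hD : k 1 * D ≤ 4 * Γ := by
    simpa [D, a, x, hv0, add_assoc] using mul_sum_range_le_Gamma2 hk0 hF N
  have hD0 : 0 ≤ D := sum_nonneg fun n _ => mul_nonneg (ha n) (sq_nonneg _)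
  have hKN0 : 0 ≤ KN := sum_nonneg fun n _ => ha n
  have hMN : MN ≤ ∑' j : ℕ, k j * (j : ℝ) ^ 2 := sum_range_succ_mul_sq_le hk0 hM N
  have hB : k 1 ^ 2 * (16 * D + 18 * x 0 ^ 2 * KN) ≤ 41 * K * Γ := by
    nlinarith [mul_le_mul_of_nonneg_right hk1 hΓ, mul_le_mul_of_nonneg_right (hK N) hΓ,
      mul_le_mul_of_nonneg_left hx0 hKN0, mul_le_mul_of_nonneg_left hD (hk0 1)]
  calc k 1 ^ 2 * (∑ n ∈ range N, a n * x n) ^ 2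
      ≤ k 1 ^ 2 * (MN * (16 * D + 18 * x 0 ^ 2 * KN)) := by
        gcongr
        exact sq_sum_range_mul_le ha hanti x N
    _ = MN * (k 1 ^ 2 * (16 * D + 18 * x 0 ^ 2 * KN)) := by ring
    _ ≤ (∑' j : ℕ, k j * (j : ℝ) ^ 2) * (41 * K * Γ) :=
        mul_le_mul hMN hB (by positivity)
          ((sum_nonneg fun n _ => mul_nonneg (ha n) (by positivity)).trans hMN)
    _ = 41 * K * (∑' j : ℕ, k j * (j : ℝ) ^ 2) * Γ := by ring

theorem sq_le_Gamma2_of_hasSum {k : ℤ → ℝ} (hk0 : ∀ j, 0 ≤ k j) (hksym : ∀ j, k (-j) = k j)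
    (hksum : Summable k) (hmono : ∀ m n : ℤ, 1 ≤ m → m ≤ n → k n ≤ k m)
    (hM : Summable fun j : ℕ => k j * (j : ℝ) ^ 2) {v : ℤ → ℝ} (hv0 : v 0 = 0) (hv1 : v (-1) = v 1)
    (hF : Summable fun p : ℤ × ℤ => k p.1 * k p.2 * (v (p.1 + p.2) - v p.1 - v p.2 + v 0) ^ 2)
    {L : ℝ} (hL : HasSum (fun n : ℕ => 2 * (k (n + 1) * v (n + 1))) L) :
    k 1 ^ 2 * L ^ 2 ≤ 164 * (∑' j, k j) * (∑' j : ℕ, k j * (j : ℝ) ^ 2) * Gamma2 k v := by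
  refine le_of_tendsto' ((hL.tendsto_sum_nat.pow 2).const_mul _) fun N => ?_
  have := sq_sum_range_le_Gamma2 hk0 hksym hksum hmono hM hv0 hv1 hF N
  rw [← mul_sum]
  linarith

theorem stmt16 :
    ∃ C₀ : ℝ, 0 < C₀ ∧
      ∀ k : ℤ → ℝ, (∀ j, 0 ≤ k j) → (∀ j, k (-j) = k j) → k 0 = 0 → Summable k →
        (∀ m n : ℤ, 1 ≤ m → m ≤ n → k n ≤ k m) → 0 < k 1 →
        Summable (fun j : ℕ => k (j : ℤ) * (j : ℝ) ^ 2) →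
        ∀ u : ℤ → ℝ, Summable (fun j : ℤ => k j * |u j - u 0|) →
          ENNReal.ofReal
              (((k 1) ^ 2 / (C₀ * (∑' j : ℤ, k j) * (∑' j : ℕ, k (j : ℤ) * (j : ℝ) ^ 2)))
                * (Lop k u) ^ 2)
            ≤ Gamma2e k u := by
  refine ⟨164, by norm_num, fun k hk0 hksym _ hksum hmono hk1 hM u hu => ?_⟩
  refine le_trans ?_ (Gamma2e_symmetrize_le hk0 hksym u)
  by_cases htop : Gamma2e k (symmetrize u) = ⊤
  · simp [htop]
  rw [Gamma2e_eq_ofReal_Gamma2 hk0 htop]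
  refine ENNReal.ofReal_le_ofReal ?_
  have hK : 0 < ∑' j, k j := hk1.trans_le (hksum.le_tsum 1 fun j _ => hk0 j)
  have hM0 : 0 < ∑' j : ℕ, k j * (j : ℝ) ^ 2 := by
    refine hk1.trans_le ?_
    simpa using hM.le_tsum 1 fun j _ => mul_nonneg (hk0 _) (sq_nonneg _)
  have hLop := hasSum_Lop hksym (summable_mul_sub_of_summable_mul_abs hk0 hu)
  have := sq_le_Gamma2_of_hasSum hk0 hksym hksum hmono hM (symmetrize_zero u)
    (symmetrize_neg u 1) (summable_of_Gamma2e_ne_top hk0 htop) hLop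
  rw [div_mul_eq_mul_div, div_le_iff₀ (by positivity)]
  linarith
end
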